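/- arXiv:2603.00447 — 3 statements merged into one kernel-verified Lean document; each statement's English description precedes it below -/
import Mathlib

section
/- For any real x not a multiple of π/g, and integer g ≥ 1, the sum over j from 0 to g−1 of cot²(x + jπ/g) equals g²·csc²(gx) − g. -/
open Finset

lemma aux_rsum (g : ℕ) (hg : 1 ≤ g) (p : ℕ) :
    ∑ j ∈ Finset.range g, (Complex.exp (2*Real.pi*Complex.I/g) ^ p) ^ j
      = if g ∣ p then (g:ℂ) else 0 := by
  have hprim := Complex.isPrimitiveRoot_exp g (by omega)
  by_cases hd : g ∣ p
  · rw [if_pos hd, (hprim.pow_eq_one_iff_dvd p).mpr hd]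
    simp
  · rw [if_neg hd]
    have h1 : Complex.exp (2*Real.pi*Complex.I/g) ^ p ≠ 1 :=
      fun h => hd ((hprim.pow_eq_one_iff_dvd p).mp h)
    have h2 : (Complex.exp (2*Real.pi*Complex.I/g) ^ p) ^ g = 1 := by
      rw [pow_right_comm, hprim.pow_eq_one, one_pow]
    rw [geom_sum_eq h1, h2]
    simp

lemma aux_key (g : ℕ) (hg : 1 ≤ g) (u : ℂ) :
    ∑ j ∈ Finset.range g,
        ((Complex.exp (2*Real.pi*Complex.I/g))^j * u)
          * (∑ n ∈ Finset.range g, ((Complex.exp (2*Real.pi*Complex.I/g))^j * u)^n)^2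
      = (g:ℂ)^2 * u^g := by
  set ω := Complex.exp (2*Real.pi*Complex.I/g) with hω
  have step1 : ∀ v : ℂ, v * (∑ n ∈ Finset.range g, v^n)^2
      = ∑ n ∈ Finset.range g, ∑ m ∈ Finset.range g, v^(n+m+1) := by
    intro v
    rw [sq, Finset.sum_mul_sum, Finset.mul_sum]
    refine Finset.sum_congr rfl fun n _ => ?_
    rw [Finset.mul_sum]
    refine Finset.sum_congr rfl fun m _ => ?_
    ring
  calc ∑ j ∈ Finset.range g, (ω^j * u) * (∑ n ∈ Finset.range g, (ω^j*u)^n)^2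
      = ∑ n ∈ Finset.range g, ∑ m ∈ Finset.range g, ∑ j ∈ Finset.range g,
          (ω^j*u)^(n+m+1) := by
        simp_rw [step1]
        rw [Finset.sum_comm]
        exact Finset.sum_congr rfl fun n _ => Finset.sum_comm
    _ = ∑ n ∈ Finset.range g, ∑ m ∈ Finset.range g,
          (if g ∣ (n+m+1) then (g:ℂ) else 0) * u^(n+m+1) := by
        refine Finset.sum_congr rfl fun n _ => Finset.sum_congr rfl fun m _ => ?_
        rw [← aux_rsum g hg (n+m+1), Finset.sum_mul]
        refine Finset.sum_congr rfl fun j _ => ?_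
        rw [mul_pow, ← pow_mul, ← pow_mul, mul_comm j (n+m+1), pow_mul]
    _ = ∑ n ∈ Finset.range g, ∑ m ∈ Finset.range g,
          (if m = g - 1 - n then (g:ℂ) * u^g else 0) := by
        refine Finset.sum_congr rfl fun n hn => Finset.sum_congr rfl fun m hm => ?_
        rw [Finset.mem_range] at hn hm
        by_cases hd : g ∣ (n+m+1)
        · obtain ⟨k, hk⟩ := hd
          have hk2 : k < 2 := by
            by_contra h
            push_neg at h
            have : g * 2 ≤ g * k := Nat.mul_le_mul_left g h
            omega
          have hng : n + m + 1 = g := by interval_cases k <;> omega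
          rw [if_pos ⟨k, hk⟩, if_pos (by omega), hng]
        · rw [if_neg hd, if_neg ?_, zero_mul]
          intro h
          exact hd ⟨1, by omega⟩
    _ = ∑ n ∈ Finset.range g, (g:ℂ) * u^g := by
        refine Finset.sum_congr rfl fun n hn => ?_
        rw [Finset.sum_ite_eq' (Finset.range g) (g-1-n) (fun _ => (g:ℂ)*u^g),
          if_pos (Finset.mem_range.mpr (by omega))]
    _ = (g:ℂ)^2 * u^g := by
        rw [Finset.sum_const, Finset.card_range, nsmul_eq_mul]
        ring

lemma aux_h3 (t : ℝ) :
    Complex.exp (-(t:ℂ)*Complex.I) * Complex.exp ((t:ℂ)*Complex.I) = 1 := by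
  rw [← Complex.exp_add]
  ring_nf
  exact Complex.exp_zero

lemma aux_exp_sub (t : ℝ) :
    Complex.exp (2*Complex.I*t) - 1
      = 2*Complex.I*Complex.sin t * Complex.exp (Complex.I*t) := by
  have h1 : Complex.exp (2*Complex.I*t)
      = Complex.exp ((t:ℂ)*Complex.I) * Complex.exp ((t:ℂ)*Complex.I) := by
    rw [← Complex.exp_add]; ring_nf
  have h2 : Complex.exp (Complex.I*(t:ℂ)) = Complex.exp ((t:ℂ)*Complex.I) := by ring_nf
  rw [h1, h2, Complex.sin]
  linear_combination aux_h3 t + (-(Complex.exp (-(t:ℂ)*Complex.I)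
    - Complex.exp ((t:ℂ)*Complex.I))*Complex.exp ((t:ℂ)*Complex.I))*Complex.I_sq

lemma aux_exp_add (t : ℝ) :
    Complex.exp (2*Complex.I*t) + 1
      = 2*Complex.cos t * Complex.exp (Complex.I*t) := by
  have h1 : Complex.exp (2*Complex.I*t)
      = Complex.exp ((t:ℂ)*Complex.I) * Complex.exp ((t:ℂ)*Complex.I) := by
    rw [← Complex.exp_add]; ring_nf
  have h2 : Complex.exp (Complex.I*(t:ℂ)) = Complex.exp ((t:ℂ)*Complex.I) := by ring_nf
  rw [h1, h2, Complex.cos]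
  linear_combination -aux_h3 t

lemma aux_cot (t : ℝ) (h : Real.sin t ≠ 0) :
    ((Real.cos t / Real.sin t : ℝ) : ℂ)^2
      = -(Complex.exp (2*Complex.I*t) + 1)^2 / (Complex.exp (2*Complex.I*t) - 1)^2 := by
  have hsc : Complex.sin t ≠ 0 := by
    rw [← Complex.ofReal_sin]; exact_mod_cast h
  have hw : Complex.exp (Complex.I*(t:ℂ)) ≠ 0 := Complex.exp_ne_zero _
  have hsq : (2*Complex.I*Complex.sin t * Complex.exp (Complex.I*(t:ℂ)))^2
      = -(4 * Complex.sin t^2 * Complex.exp (Complex.I*(t:ℂ))^2) := by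
    have := Complex.I_sq
    ring_nf
    linear_combination (4 * Complex.sin (t:ℂ)^2 * Complex.exp (Complex.I*(t:ℂ))^2) * Complex.I_sq
  rw [aux_exp_sub, aux_exp_add, hsq]
  push_cast
  field_simp
  ring

lemma aux_csc (t : ℝ) (h : Real.sin t ≠ 0) :
    ((1 / Real.sin t : ℝ) : ℂ)^2
      = -(4 * Complex.exp (2*Complex.I*t)) / (Complex.exp (2*Complex.I*t) - 1)^2 := by
  have hsc : Complex.sin t ≠ 0 := by
    rw [← Complex.ofReal_sin]; exact_mod_cast h
  have hw : Complex.exp (Complex.I*(t:ℂ)) ≠ 0 := Complex.exp_ne_zero _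
  have hsq : (2*Complex.I*Complex.sin t * Complex.exp (Complex.I*(t:ℂ)))^2
      = -(4 * Complex.sin t^2 * Complex.exp (Complex.I*(t:ℂ))^2) := by
    ring_nf
    linear_combination (4 * Complex.sin (t:ℂ)^2 * Complex.exp (Complex.I*(t:ℂ))^2) * Complex.I_sq
  have he2 : Complex.exp (2*Complex.I*t) = Complex.exp (Complex.I*(t:ℂ))^2 := by
    rw [sq, ← Complex.exp_add]; ring_nf
  rw [aux_exp_sub, hsq, he2]
  push_cast
  field_simp

/-- Sum of squared cotangents identity:
`∑_{j=0}^{g-1} cot²(x + jπ/g) = g² csc²(gx) − g`. -/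
theorem stmt_2 (g : ℕ) (hg : 1 ≤ g) (x : ℝ)
    (hx : ∀ j < g, ∀ k : ℤ, x + (j : ℝ) * Real.pi / (g : ℝ) ≠ (k : ℝ) * Real.pi) :
    ∑ j ∈ Finset.range g,
        (Real.cos (x + (j : ℝ) * Real.pi / (g : ℝ)) /
          Real.sin (x + (j : ℝ) * Real.pi / (g : ℝ))) ^ 2
      = (g : ℝ) ^ 2 * (1 / Real.sin ((g : ℝ) * x)) ^ 2 - (g : ℝ) := by
  have hg0 : (g:ℝ) ≠ 0 := Nat.cast_ne_zero.mpr (by omega)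
  have hsin : ∀ j < g, Real.sin (x + (j:ℝ)*Real.pi/(g:ℝ)) ≠ 0 := by
    intro j hj h
    obtain ⟨n, hn⟩ := Real.sin_eq_zero_iff.mp h
    exact hx j hj n hn.symm
  set ω : ℂ := Complex.exp (2*Real.pi*Complex.I/(g:ℂ)) with hωdef
  set u : ℂ := Complex.exp (2*Complex.I*(x:ℂ)) with hudef
  have hv : ∀ j : ℕ, Complex.exp (2*Complex.I*((x + (j:ℝ)*Real.pi/(g:ℝ) : ℝ):ℂ)) = ω^j * u := by
    intro j
    rw [hωdef, hudef, ← Complex.exp_nat_mul, ← Complex.exp_add]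
    congr 1
    push_cast
    field_simp
    ring
  have hω1 : ω^g = 1 := (Complex.isPrimitiveRoot_exp g (by omega)).pow_eq_one
  have hug : u^g = Complex.exp (2*Complex.I*(((g:ℝ)*x : ℝ):ℂ)) := by
    rw [hudef, ← Complex.exp_nat_mul]
    congr 1
    push_cast
    ring
  have hU1 : u^g ≠ 1 := by
    rw [hug]
    intro h1
    obtain ⟨n, hn⟩ := Complex.exp_eq_one_iff.mp h1
    have hgx : (g:ℝ)*x = n * Real.pi := by
      have h2I : (2*Complex.I : ℂ) ≠ 0 := by simp [Complex.I_ne_zero]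
      have hc : (((g:ℝ)*x : ℝ) : ℂ) = ((n * Real.pi : ℝ):ℂ) := by
        apply mul_left_cancel₀ h2I
        push_cast at hn ⊢
        linear_combination hn
      exact_mod_cast hc
    have hgz : (0:ℤ) < (g:ℤ) := by exact_mod_cast (by omega : 0 < g)
    have hj0 : 0 ≤ (-n) % (g:ℤ) := Int.emod_nonneg _ (by omega)
    have hjg : (-n) % (g:ℤ) < (g:ℤ) := Int.emod_lt_of_pos _ hgz
    set j : ℕ := ((-n) % (g:ℤ)).toNat with hjdef
    have hjlt : j < g := by omega
    set m : ℤ := -((-n)/(g:ℤ)) with hmdef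
    apply hx j hjlt m
    have hed := Int.emod_add_mul_ediv (-n) (g:ℤ)
    have hnj : (n : ℤ) + (j:ℤ) = (g:ℤ) * m := by
      rw [hmdef]
      have : ((j:ℤ)) = (-n) % (g:ℤ) := by omega
      rw [this]
      linarith [hed]
    have hnjR : (n:ℝ) + (j:ℝ) = (g:ℝ) * (m:ℝ) := by exact_mod_cast hnj
    field_simp
    linear_combination hgx + Real.pi * hnjR
  have hU1' : (1:ℂ) - u^g ≠ 0 := sub_ne_zero.mpr (Ne.symm hU1)
  have hsingx : Real.sin ((g:ℝ)*x) ≠ 0 := by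
    intro h
    apply hU1
    have hes := aux_exp_sub ((g:ℝ)*x)
    rw [← Complex.ofReal_sin, h] at hes
    push_cast at hes
    rw [hug]
    push_cast
    linear_combination hes
  have hmain : ∀ j ∈ Finset.range g,
      (((Real.cos (x + (j:ℝ)*Real.pi/(g:ℝ)) / Real.sin (x + (j:ℝ)*Real.pi/(g:ℝ)) : ℝ)) : ℂ)^2
        = -1 - 4*((ω^j*u) * (∑ n ∈ Finset.range g, (ω^j*u)^n)^2)/(1-u^g)^2 := by
    intro j hj
    rw [Finset.mem_range] at hj
    have hs := hsin j hj
    have hsc : Complex.sin ((x + (j:ℝ)*Real.pi/(g:ℝ) : ℝ):ℂ) ≠ 0 := by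
      rw [← Complex.ofReal_sin]; exact_mod_cast hs
    have hvm : (ω^j*u) - 1 ≠ 0 := by
      rw [← hv j, aux_exp_sub]
      exact mul_ne_zero (mul_ne_zero (mul_ne_zero two_ne_zero Complex.I_ne_zero) hsc)
        (Complex.exp_ne_zero _)
    have hvg : (ω^j*u)^g = u^g := by
      rw [mul_pow, ← pow_mul, mul_comm j g, pow_mul, hω1, one_pow, one_mul]
    set v := ω^j*u with hvdef
    set S := ∑ n ∈ Finset.range g, v^n with hSdef
    have hgeom : S * (v - 1) = u^g - 1 := by
      rw [hSdef, geom_sum_mul, hvg]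
    have hSne : S ≠ 0 := by
      intro h0
      rw [h0, zero_mul] at hgeom
      exact hU1 (by linear_combination -hgeom)
    have h1U : ((1:ℂ)-u^g)^2 = S^2*(v-1)^2 := by
      linear_combination (-(u^g - 1) - S*(v-1)) * hgeom
    rw [aux_cot _ hs, hv j, ← hvdef, h1U]
    field_simp
    ring
  have key := aux_key g hg u
  rw [← hωdef] at key
  have hsum : ∑ j ∈ Finset.range g,
        ((-1 : ℂ) - 4*((ω^j*u) * (∑ n ∈ Finset.range g, (ω^j*u)^n)^2)/(1-u^g)^2)
      = -(g:ℂ) - 4*((g:ℂ)^2*u^g)/(1-u^g)^2 := by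
    rw [Finset.sum_sub_distrib, Finset.sum_const, Finset.card_range, ← Finset.sum_div,
      ← Finset.mul_sum, key]
    simp
  have hcsc := aux_csc ((g:ℝ)*x) hsingx
  apply Complex.ofReal_injective
  push_cast at hmain hcsc hug ⊢
  rw [Finset.sum_congr rfl hmain, hsum, hcsc, ← hug]
  have hU2 : (u^g - 1 : ℂ) ≠ 0 := sub_ne_zero.mpr hU1
  field_simp
  ring
end

section
/- Let f(x,y) = ⟨x,y⟩² + Σ_{α=1}^{p−1} ⟨E_α x, y⟩² on Sⁿ × Sⁿ ⊂ ℝ^{n+1} × ℝ^{n+1}, where E_1,…,E_{p−1} are skew-symmetric orthogonal matrices on ℝ^{n+1} satisfying E_αE_β + E_βE_α = −2δ_{αβ}I. Then the gradient of f with respect to the product metric satisfies |∇f|² = 8f(1 − f). -/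
open Matrix
/-- The tangential (spherical) gradient of a function on Euclidean space, at a point of the
unit sphere: the projection of the ambient Euclidean gradient onto the tangent space. -/
noncomputable def sphGrad {k : ℕ} (g : EuclideanSpace ℝ (Fin k) → ℝ)
    (x : EuclideanSpace ℝ (Fin k)) : EuclideanSpace ℝ (Fin k) :=
  gradient g x - (inner ℝ (gradient g x) x : ℝ) • x

/-- `f(x,y) = ⟨x,y⟩² + Σ_α ⟨E_α x, y⟩²`. -/
noncomputable def cliffF (n p : ℕ) (E : Fin (p - 1) → Matrix (Fin (n + 1)) (Fin (n + 1)) ℝ)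
    (x y : EuclideanSpace ℝ (Fin (n + 1))) : ℝ :=
  (inner ℝ x y : ℝ) ^ 2 +
    ∑ α : Fin (p - 1),
      (inner ℝ ((WithLp.equiv 2 (Fin (n + 1) → ℝ)).symm
        ((E α).mulVec (WithLp.equiv 2 (Fin (n + 1) → ℝ) x))) y : ℝ) ^ 2

section Helpers

variable {k : ℕ}

/-- Matrix acting on a Euclidean vector. -/
noncomputable def mvAux (A : Matrix (Fin k) (Fin k) ℝ) (a : EuclideanSpace ℝ (Fin k)) :
    EuclideanSpace ℝ (Fin k) :=
  (WithLp.equiv 2 (Fin k → ℝ)).symm (A.mulVec (WithLp.equiv 2 (Fin k → ℝ) a))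

lemma inner_mvAux (A : Matrix (Fin k) (Fin k) ℝ) (a b : EuclideanSpace ℝ (Fin k)) :
    (inner ℝ (mvAux A a) b : ℝ) = (inner ℝ a (mvAux Aᵀ b) : ℝ) := by
  simp only [mvAux, PiLp.inner_apply, RCLike.inner_apply, conj_trivial,
    WithLp.equiv_symm_apply, Matrix.mulVec, dotProduct, Matrix.transpose_apply,
    WithLp.equiv_apply, PiLp.toLp_apply, Finset.sum_mul, Finset.mul_sum]
  rw [Finset.sum_comm]
  apply Finset.sum_congr rfl
  intro i _
  apply Finset.sum_congr rfl
  intro j _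
  ring

lemma mvAux_mvAux (A B : Matrix (Fin k) (Fin k) ℝ) (a : EuclideanSpace ℝ (Fin k)) :
    mvAux A (mvAux B a) = mvAux (A * B) a := by
  simp [mvAux, Matrix.mulVec_mulVec]

lemma grad_inner_sq (w z : EuclideanSpace ℝ (Fin k)) :
    HasGradientAt (fun z' => (inner ℝ z' w : ℝ) ^ 2) ((2 * (inner ℝ z w : ℝ)) • w) z := by
  rw [hasGradientAt_iff_hasFDerivAt]
  have h := ((innerSL ℝ w).hasFDerivAt (x := z)).mul ((innerSL ℝ w).hasFDerivAt (x := z))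
  have h2 : HasFDerivAt (fun z' => (inner ℝ z' w : ℝ) ^ 2)
      ((innerSL ℝ w z) • innerSL ℝ w + (innerSL ℝ w z) • innerSL ℝ w) z := by
    simpa [pow_two, mul_comm, Pi.mul_def, real_inner_comm] using h
  refine h2.congr_fderiv ?_
  ext a
  simp [inner_smul_left, real_inner_comm, InnerProductSpace.toDual_apply_apply, innerSL_apply_apply,
    mul_comm]
  ring

lemma grad_sum_inner_sq {m : ℕ} (v : Fin m → EuclideanSpace ℝ (Fin k))
    (z : EuclideanSpace ℝ (Fin k)) :
    HasGradientAt (fun z' => ∑ i, (inner ℝ z' (v i) : ℝ) ^ 2)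
      (∑ i, (2 * (inner ℝ z (v i) : ℝ)) • v i) z := by
  rw [hasGradientAt_iff_hasFDerivAt]
  have h := HasFDerivAt.sum (fun i (_ : i ∈ Finset.univ) =>
    ((grad_inner_sq (v i) z).hasFDerivAt))
  simpa [map_sum, Finset.sum_fn] using h

lemma sph_main {m : ℕ} (v : Fin m → EuclideanSpace ℝ (Fin k))
    (hv : ∀ i j, (inner ℝ (v i) (v j) : ℝ) = if i = j then 1 else 0)
    (z : EuclideanSpace ℝ (Fin k)) (hz : ‖z‖ = 1) :
    ‖sphGrad (fun z' => ∑ i, (inner ℝ z' (v i) : ℝ) ^ 2) z‖ ^ 2 =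
      4 * (∑ i, (inner ℝ z (v i) : ℝ) ^ 2) - 4 * (∑ i, (inner ℝ z (v i) : ℝ) ^ 2) ^ 2 := by
  set F : ℝ := ∑ i, (inner ℝ z (v i) : ℝ) ^ 2 with hF
  set G : EuclideanSpace ℝ (Fin k) := ∑ i, (2 * (inner ℝ z (v i) : ℝ)) • v i with hG
  have hg : gradient (fun z' => ∑ i, (inner ℝ z' (v i) : ℝ) ^ 2) z = G :=
    (grad_sum_inner_sq v z).gradient
  have hzz : (inner ℝ z z : ℝ) = 1 := by
    rw [real_inner_self_eq_norm_sq, hz]; norm_num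
  have hGz : (inner ℝ G z : ℝ) = 2 * F := by
    rw [hG, sum_inner]
    simp only [inner_smul_left, conj_trivial, hF, Finset.mul_sum]
    apply Finset.sum_congr rfl
    intro i _
    rw [real_inner_comm]
    ring
  have hGG : (inner ℝ G G : ℝ) = 4 * F := by
    rw [hG, sum_inner]
    simp only [inner_sum, inner_smul_left, inner_smul_right, conj_trivial, hv,
      mul_ite, mul_one, mul_zero, Finset.sum_ite_eq, Finset.mem_univ, if_true]
    rw [hF, Finset.mul_sum]
    apply Finset.sum_congr rfl
    intro i _
    ring
  have hzG : (inner ℝ z G : ℝ) = 2 * F := by rw [real_inner_comm]; exact hGz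
  rw [sphGrad, hg, hGz, ← real_inner_self_eq_norm_sq]
  simp only [inner_sub_left, inner_sub_right, inner_smul_left, inner_smul_right, conj_trivial,
    hGG, hzz, hzG]
  rw [hGz]
  ring

lemma mvAux_neg (A : Matrix (Fin k) (Fin k) ℝ) (a : EuclideanSpace ℝ (Fin k)) :
    mvAux (-A) a = -(mvAux A a) := by
  ext i; simp [mvAux, Matrix.neg_mulVec]

lemma mvAux_add (A B : Matrix (Fin k) (Fin k) ℝ) (a : EuclideanSpace ℝ (Fin k)) :
    mvAux (A + B) a = mvAux A a + mvAux B a := by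
  ext i; simp [mvAux, Matrix.add_mulVec]

lemma mvAux_smul (c : ℝ) (A : Matrix (Fin k) (Fin k) ℝ) (a : EuclideanSpace ℝ (Fin k)) :
    mvAux (c • A) a = c • (mvAux A a) := by
  ext i; simp [mvAux, Matrix.smul_mulVec]

lemma mvAux_one (a : EuclideanSpace ℝ (Fin k)) :
    mvAux (1 : Matrix (Fin k) (Fin k) ℝ) a = a := by
  ext i; simp [mvAux]

lemma mvAux_zero (a : EuclideanSpace ℝ (Fin k)) :
    mvAux (0 : Matrix (Fin k) (Fin k) ℝ) a = 0 := by
  ext i; simp [mvAux]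

lemma inner_mvAux_skew {A : Matrix (Fin k) (Fin k) ℝ} (hA : Aᵀ = -A)
    (z : EuclideanSpace ℝ (Fin k)) : (inner ℝ z (mvAux A z) : ℝ) = 0 := by
  have h1 : (inner ℝ (mvAux A z) z : ℝ) = inner ℝ z (mvAux Aᵀ z) := inner_mvAux A z z
  rw [hA, mvAux_neg, inner_neg_right, real_inner_comm] at h1
  linarith

lemma inner_mvAux_pair {m : ℕ} (F : Fin m → Matrix (Fin k) (Fin k) ℝ)
    (hskew : ∀ α, (F α)ᵀ = -F α)
    (hcliff : ∀ α β, F α * F β + F β * F α =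
      if α = β then (-2 : ℝ) • (1 : Matrix (Fin k) (Fin k) ℝ) else 0)
    (z : EuclideanSpace ℝ (Fin k)) (hz : ‖z‖ = 1) (α β : Fin m) :
    (inner ℝ (mvAux (F α) z) (mvAux (F β) z) : ℝ) = if α = β then 1 else 0 := by
  have hzz : (inner ℝ z z : ℝ) = 1 := by
    rw [real_inner_self_eq_norm_sq, hz]; norm_num
  set t1 : ℝ := inner ℝ z (mvAux (F α * F β) z) with ht1
  have ht2 : (inner ℝ z (mvAux (F β * F α) z) : ℝ) = t1 := by
    have h := inner_mvAux (F β * F α)ᵀ z z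
    rw [Matrix.transpose_transpose] at h
    have htr : (F β * F α)ᵀ = F α * F β := by
      rw [Matrix.transpose_mul, hskew, hskew, Matrix.neg_mul, Matrix.mul_neg, neg_neg]
    rw [htr] at h
    rw [← h, real_inner_comm]
  have hsum : t1 + t1 = if α = β then (-2 : ℝ) else 0 := by
    nth_rewrite 2 [← ht2]
    rw [ht1, ← inner_add_right, ← mvAux_add, hcliff]
    split
    · rw [mvAux_smul, mvAux_one, inner_smul_right, hzz]; norm_num
    · rw [mvAux_zero, inner_zero_right]
  have ht1v : t1 = if α = β then (-1 : ℝ) else 0 := by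
    split <;> simp_all <;> linarith
  have key : (inner ℝ (mvAux (F α) z) (mvAux (F β) z) : ℝ) = -t1 := by
    rw [inner_mvAux, mvAux_mvAux, hskew, Matrix.neg_mul, mvAux_neg, inner_neg_right, ht1]
  rw [key, ht1v]
  split <;> norm_num

lemma family_on {m : ℕ} (F : Fin m → Matrix (Fin k) (Fin k) ℝ)
    (hskew : ∀ α, (F α)ᵀ = -F α)
    (hcliff : ∀ α β, F α * F β + F β * F α =
      if α = β then (-2 : ℝ) • (1 : Matrix (Fin k) (Fin k) ℝ) else 0)
    (z : EuclideanSpace ℝ (Fin k)) (hz : ‖z‖ = 1) (i j : Fin (m + 1)) :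
    (inner ℝ ((Fin.cons z (fun α => mvAux (F α) z) : Fin (m + 1) → _) i)
      ((Fin.cons z (fun α => mvAux (F α) z) : Fin (m + 1) → _) j) : ℝ) =
        if i = j then 1 else 0 := by
  have hzz : (inner ℝ z z : ℝ) = 1 := by
    rw [real_inner_self_eq_norm_sq, hz]; norm_num
  induction i using Fin.cases with
  | zero =>
    induction j using Fin.cases with
    | zero => simpa using hzz
    | succ β =>
      simp only [Fin.cons_zero, Fin.cons_succ]
      rw [inner_mvAux_skew (hskew β) z]
      simp [(Fin.succ_ne_zero β).symm]
  | succ α =>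
    induction j using Fin.cases with
    | zero =>
      simp only [Fin.cons_zero, Fin.cons_succ]
      rw [real_inner_comm, inner_mvAux_skew (hskew α) z]
      simp [Fin.succ_ne_zero α]
    | succ β =>
      simp only [Fin.cons_succ]
      rw [inner_mvAux_pair F hskew hcliff z hz α β]
      simp [Fin.succ_inj]

end Helpers

/-- On `Sⁿ × Sⁿ`, the gradient of `f` in the product metric satisfies `|∇f|² = 8f(1−f)`. -/
theorem stmt_5 (n p : ℕ) (hp : 2 ≤ p)
    (E : Fin (p - 1) → Matrix (Fin (n + 1)) (Fin (n + 1)) ℝ)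
    (hskew : ∀ α, (E α)ᵀ = -E α)
    (horth : ∀ α, E α * (E α)ᵀ = 1)
    (hcliff : ∀ α β, E α * E β + E β * E α =
      if α = β then (-2 : ℝ) • (1 : Matrix (Fin (n + 1)) (Fin (n + 1)) ℝ) else 0)
    (x y : EuclideanSpace ℝ (Fin (n + 1))) (hx : ‖x‖ = 1) (hy : ‖y‖ = 1) :
    ‖sphGrad (fun x' => cliffF n p E x' y) x‖ ^ 2
        + ‖sphGrad (fun y' => cliffF n p E x y') y‖ ^ 2
      = 8 * cliffF n p E x y * (1 - cliffF n p E x y) := by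
  have hskewt : ∀ α : Fin (p - 1), ((E α)ᵀ)ᵀ = -(E α)ᵀ := by
    intro α
    rw [Matrix.transpose_transpose, hskew α, neg_neg]
  have hclifft : ∀ α β : Fin (p - 1), (E α)ᵀ * (E β)ᵀ + (E β)ᵀ * (E α)ᵀ =
      if α = β then (-2 : ℝ) • (1 : Matrix (Fin (n + 1)) (Fin (n + 1)) ℝ) else 0 := by
    intro α β
    rw [hskew α, hskew β, Matrix.neg_mul, Matrix.mul_neg, neg_neg, Matrix.neg_mul,
      Matrix.mul_neg, neg_neg]
    exact hcliff α β
  set vx : Fin (p - 1 + 1) → EuclideanSpace ℝ (Fin (n + 1)) :=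
    Fin.cons y (fun α => mvAux (E α)ᵀ y) with hvx
  set vy : Fin (p - 1 + 1) → EuclideanSpace ℝ (Fin (n + 1)) :=
    Fin.cons x (fun α => mvAux (E α) x) with hvy
  have hvxon : ∀ i j, (inner ℝ (vx i) (vx j) : ℝ) = if i = j then 1 else 0 :=
    family_on (fun α => (E α)ᵀ) hskewt hclifft y hy
  have hvyon : ∀ i j, (inner ℝ (vy i) (vy j) : ℝ) = if i = j then 1 else 0 :=
    family_on E hskew hcliff x hx
  have hfx : (fun x' => cliffF n p E x' y) =
      fun x' => ∑ i, (inner ℝ x' (vx i) : ℝ) ^ 2 := by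
    funext x'
    rw [Fin.sum_univ_succ]
    simp only [hvx, Fin.cons_zero, Fin.cons_succ, cliffF]
    congr 1
    apply Finset.sum_congr rfl
    intro α _
    rw [← inner_mvAux (E α) x' y]
    rfl
  have hfy : (fun y' => cliffF n p E x y') =
      fun y' => ∑ i, (inner ℝ y' (vy i) : ℝ) ^ 2 := by
    funext y'
    rw [Fin.sum_univ_succ]
    simp only [hvy, Fin.cons_zero, Fin.cons_succ, cliffF]
    congr 1
    · rw [real_inner_comm]
    · apply Finset.sum_congr rfl
      intro α _
      rw [show (inner ℝ y' (mvAux (E α) x) : ℝ) = inner ℝ (mvAux (E α) x) y' from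
        real_inner_comm _ _]
      rfl
  have hFx : cliffF n p E x y = ∑ i, (inner ℝ x (vx i) : ℝ) ^ 2 := congrFun hfx x
  have hFy : cliffF n p E x y = ∑ i, (inner ℝ y (vy i) : ℝ) ^ 2 := congrFun hfy y
  rw [hfx, hfy, sph_main vx hvxon x hx, sph_main vy hvyon y hy, ← hFx, ← hFy]
  ring
end

section
/- Let K_n be the n×n tridiagonal τ-Kac matrix with zero main diagonal, superdiagonal entries 1, 2, …, n−1, and subdiagonal entries (n−1)τ, (n−2)τ, …, τ, for τ > 0. Then the eigenvalues of K_n are exactly (n−1−2ℓ)·√τ for ℓ = 0, 1, …, n−1, and they are simple. -/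
open Polynomial

lemma kac_poly_id (s : ℝ) (a b : ℕ) :
    (1 - C s ^ 2 * X ^ 2) * derivative ((1 + C s * X) ^ a * (1 - C s * X) ^ b)
      + C (s ^ 2 * ((a : ℝ) + b)) * X * ((1 + C s * X) ^ a * (1 - C s * X) ^ b)
      = C (s * ((a : ℝ) - b)) * ((1 + C s * X) ^ a * (1 - C s * X) ^ b) := by
  rcases a with _ | a <;> rcases b with _ | b <;>
    simp only [derivative_mul, derivative_pow, derivative_add, derivative_sub, derivative_one,
      derivative_C_mul, derivative_X, derivative_C, C_0, Nat.succ_sub_one, pow_zero,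
      Nat.cast_succ, Nat.cast_zero, C_mul, C_add, C_sub, C_pow, C_1, mul_one] <;> ring

lemma kac_coeff (τ s : ℝ) (hs2 : s ^ 2 = τ) (n ℓ : ℕ) (hℓ : ℓ < n) (i : ℕ) (hi : i < n) :
    ((i : ℝ) + 1) * ((1 + C s * X) ^ (n - 1 - ℓ) * (1 - C s * X) ^ ℓ).coeff (i + 1)
      + (if 1 ≤ i then ((n - i : ℕ) : ℝ)
          * ((1 + C s * X) ^ (n - 1 - ℓ) * (1 - C s * X) ^ ℓ).coeff (i - 1) * τ else 0)
    = (((n : ℝ) - 1 - 2 * ℓ) * s)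
        * ((1 + C s * X) ^ (n - 1 - ℓ) * (1 - C s * X) ^ ℓ).coeff i := by
  set Pl := (1 + C s * X) ^ (n - 1 - ℓ) * (1 - C s * X) ^ ℓ with hPl
  have ha : ((n - 1 - ℓ : ℕ) : ℝ) = (n : ℝ) - 1 - ℓ := by
    rw [Nat.sub_sub, Nat.cast_sub (by omega)]
    push_cast; ring
  have h0 := kac_poly_id s (n - 1 - ℓ) ℓ
  rw [show (C s) ^ 2 = C τ by rw [← C_pow, hs2]] at h0
  rw [show C (s ^ 2 * (((n - 1 - ℓ : ℕ) : ℝ) + (ℓ : ℕ))) = C (τ * ((n : ℝ) - 1)) by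
    rw [ha, hs2]; ring_nf] at h0
  rw [show C (s * (((n - 1 - ℓ : ℕ) : ℝ) - (ℓ : ℕ))) = C (((n : ℝ) - 1 - 2 * ℓ) * s) by
    rw [ha]; ring_nf] at h0
  rw [← hPl] at h0
  have h1 : derivative Pl - C τ * (derivative Pl * X ^ 2)
      + C (τ * ((n : ℝ) - 1)) * (Pl * X ^ 1) = C (((n : ℝ) - 1 - 2 * ℓ) * s) * Pl := by
    linear_combination h0
  have h2 := congrArg (fun p => coeff p i) h1
  simp only [coeff_add, coeff_sub, coeff_C_mul, coeff_mul_X_pow', coeff_derivative] at h2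
  have e3 : ((n - i : ℕ) : ℝ) = (n : ℝ) - i := Nat.cast_sub (le_of_lt hi)
  rcases i with _ | _ | m
  · norm_num at h2 ⊢
    linear_combination h2
  · norm_num at h2 ⊢
    rw [e3]
    push_cast
    linear_combination h2
  · have c2 : 2 ≤ m + 2 := by omega
    have c1 : 1 ≤ m + 2 := by omega
    rw [if_pos c2, if_pos c1] at h2
    rw [if_pos c1, e3]
    have e4 : m + 2 - 2 = m := by omega
    rw [e4] at h2
    have e5 : m + 2 - 1 = m + 1 := by omega
    rw [e5] at h2 ⊢
    push_cast at h2 ⊢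
    linear_combination h2

/-- The τ-Kac matrix of order `n` has the simple eigenvalues `(n−1−2ℓ)√τ`, `ℓ = 0,…,n−1`. -/
theorem stmt_17 (n : ℕ) (τ : ℝ) (hτ : 0 < τ) (K : Matrix (Fin n) (Fin n) ℝ)
    (hK : ∀ i j : Fin n, K i j =
      if (j : ℕ) = (i : ℕ) + 1 then ((i : ℕ) + 1 : ℝ)
      else if (i : ℕ) = (j : ℕ) + 1 then ((n - (i : ℕ) : ℕ) : ℝ) * τ
      else 0) :
    (∀ ℓ : Fin n, Module.End.HasEigenvalue (Matrix.toLin' K)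
        (((n : ℝ) - 1 - 2 * (ℓ : ℕ)) * Real.sqrt τ)) ∧
      (∀ μ : ℝ, Module.End.HasEigenvalue (Matrix.toLin' K) μ →
        ∃ ℓ : Fin n, μ = ((n : ℝ) - 1 - 2 * (ℓ : ℕ)) * Real.sqrt τ) ∧
      (∀ ℓ : Fin n, Module.finrank ℝ
          (Module.End.eigenspace (Matrix.toLin' K)
            (((n : ℝ) - 1 - 2 * (ℓ : ℕ)) * Real.sqrt τ)) = 1) := by
  classical
  set f := Matrix.toLin' K with hf
  set s := Real.sqrt τ with hsdef
  have hs0 : 0 < s := Real.sqrt_pos.mpr hτ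
  have hs2 : s ^ 2 = τ := Real.sq_sqrt hτ.le
  -- the basic sum formula for the action of `K`
  have hsum : ∀ (i : Fin n) (w : ℕ → ℝ), w n = 0 →
      ∑ j : Fin n, K i j * w j = ((i : ℕ) + 1 : ℝ) * w ((i : ℕ) + 1) +
        (if 1 ≤ (i : ℕ) then ((n - (i : ℕ) : ℕ) : ℝ) * w ((i : ℕ) - 1) * τ else 0) := by
    intro i w hw
    have key : ∀ j : Fin n, K i j * w j =
        (if (j : ℕ) = (i : ℕ) + 1 then ((i : ℕ) + 1 : ℝ) * w (j : ℕ) else 0)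
        + (if (j : ℕ) = (i : ℕ) - 1 ∧ 1 ≤ (i : ℕ)
            then ((n - (i : ℕ) : ℕ) : ℝ) * w (j : ℕ) * τ else 0) := by
      intro j
      rw [hK]
      split_ifs <;> first | ring1 | (exfalso; omega)
    simp only [key, Finset.sum_add_distrib]
    have e1 : ∀ (c : ℕ) (g : ℕ → ℝ), ∑ j : Fin n, (if (j : ℕ) = c then g (j : ℕ) else 0)
        = if c < n then g c else 0 := by
      intro c g
      rw [Fin.sum_univ_eq_sum_range (fun k => if k = c then g k else 0) n,
        Finset.sum_ite_eq' (Finset.range n) c g]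
      simp
    have e2 : ∀ (q : Prop) [Decidable q] (c : ℕ) (g : ℕ → ℝ),
        ∑ j : Fin n, (if (j : ℕ) = c ∧ q then g (j : ℕ) else 0)
        = if q then (if c < n then g c else 0) else 0 := by
      intro q _ c g
      by_cases hq : q
      · simp only [hq, and_true, if_true]; exact e1 c g
      · simp [hq]
    rw [e1 ((i : ℕ) + 1) (fun k => ((i : ℕ) + 1 : ℝ) * w k),
        e2 (1 ≤ (i : ℕ)) ((i : ℕ) - 1) (fun k => ((n - (i : ℕ) : ℕ) : ℝ) * w k * τ)]
    rcases Nat.lt_or_ge ((i : ℕ) + 1) n with h | h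
    · have h2 : (i : ℕ) - 1 < n := by omega
      simp [h, h2]
    · have hin : (i : ℕ) + 1 = n := by omega
      have h2 : (i : ℕ) - 1 < n := by omega
      simp [Nat.lt_irrefl, hin, hw, h2]
  -- eigenvectors
  have hPdeg : ∀ ℓ : Fin n,
      ((1 + C s * X) ^ (n - 1 - (ℓ : ℕ)) * (1 - C s * X) ^ (ℓ : ℕ)).natDegree < n := by
    intro ℓ
    have hCX : (C s * X).natDegree ≤ 1 := (natDegree_C_mul_le s X).trans_eq natDegree_X
    have h1 : (1 + C s * X).natDegree ≤ 1 := by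
      apply (natDegree_add_le _ _).trans
      simp only [natDegree_one]
      exact max_le (by omega) hCX
    have h2 : (1 - C s * X).natDegree ≤ 1 := by
      apply (natDegree_sub_le _ _).trans
      simp only [natDegree_one]
      exact max_le (by omega) hCX
    calc ((1 + C s * X) ^ (n - 1 - (ℓ : ℕ)) * (1 - C s * X) ^ (ℓ : ℕ)).natDegree
        ≤ ((1 + C s * X) ^ (n - 1 - (ℓ : ℕ))).natDegree
          + ((1 - C s * X) ^ (ℓ : ℕ)).natDegree := natDegree_mul_le
      _ ≤ (n - 1 - (ℓ : ℕ)) * 1 + (ℓ : ℕ) * 1 := by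
          gcongr
          · exact (natDegree_pow_le).trans (by gcongr)
          · exact (natDegree_pow_le).trans (by gcongr)
      _ < n := by have := ℓ.isLt; omega
  have hPne : ∀ ℓ : Fin n,
      (1 + C s * X) ^ (n - 1 - (ℓ : ℕ)) * (1 - C s * X) ^ (ℓ : ℕ) ≠ 0 := by
    intro ℓ
    apply mul_ne_zero <;> apply pow_ne_zero <;>
      · intro h
        have := congrArg (fun p => coeff p 0) h
        simp at this
  have hvec : ∀ ℓ : Fin n, Module.End.HasEigenvector f (((n : ℝ) - 1 - 2 * (ℓ : ℕ)) * s)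
      (fun j : Fin n =>
        ((1 + C s * X) ^ (n - 1 - (ℓ : ℕ)) * (1 - C s * X) ^ (ℓ : ℕ)).coeff (j : ℕ)) := by
    intro ℓ
    set Pl := (1 + C s * X) ^ (n - 1 - (ℓ : ℕ)) * (1 - C s * X) ^ (ℓ : ℕ) with hPl
    constructor
    · rw [Module.End.mem_eigenspace_iff]
      funext i
      have happ : (f fun j : Fin n => Pl.coeff (j : ℕ)) i
          = ∑ j : Fin n, K i j * Pl.coeff (j : ℕ) := by
        rw [hf]
        simp [Matrix.toLin'_apply, Matrix.mulVec, dotProduct]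
      rw [happ, hsum i (fun k => Pl.coeff k) (coeff_eq_zero_of_natDegree_lt (hPdeg ℓ))]
      have := kac_coeff τ s hs2 n ℓ ℓ.isLt i i.isLt
      rw [← hPl] at this
      simpa using this
    · intro hzero
      apply hPne ℓ
      rw [← hPl]
      ext k
      rcases Nat.lt_or_ge k n with hk | hk
      · have := congrFun hzero ⟨k, hk⟩
        simpa using this
      · exact coeff_eq_zero_of_natDegree_lt (lt_of_lt_of_le (hPdeg ℓ) hk)
  have hval : ∀ ℓ : Fin n, Module.End.HasEigenvalue f (((n : ℝ) - 1 - 2 * (ℓ : ℕ)) * s) :=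
    fun ℓ => Module.End.hasEigenvalue_of_hasEigenvector (hvec ℓ)
  -- injectivity of the eigenvalue assignment
  have hinj : ∀ ℓ ℓ' : Fin n,
      ((n : ℝ) - 1 - 2 * (ℓ : ℕ)) * s = ((n : ℝ) - 1 - 2 * (ℓ' : ℕ)) * s → ℓ = ℓ' := by
    intro ℓ ℓ' h
    have h2 := mul_right_cancel₀ (ne_of_gt hs0) h
    have h3 : ((ℓ : ℕ) : ℝ) = ((ℓ' : ℕ) : ℝ) := by linarith
    exact Fin.ext (by exact_mod_cast h3)
  refine ⟨hval, ?_, ?_⟩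
  · -- no other eigenvalues
    intro μ hμ
    by_contra hcon
    push_neg at hcon
    have hind := Module.End.eigenspaces_iSupIndep f
    haveI := hind.fintypeNeBotOfFiniteDimensional
    have hcard : Fintype.card { x : ℝ // Module.End.eigenspace f x ≠ ⊥ } ≤ n := by
      have h := hind.subtype_ne_bot_le_finrank
      simpa [Module.finrank_pi] using h
    have hbig : n + 1 ≤ Fintype.card { x : ℝ // Module.End.eigenspace f x ≠ ⊥ } := by
      have h := Fintype.card_le_of_injective
        (fun o : Option (Fin n) => Option.elim o
          (⟨μ, Module.End.hasEigenvalue_iff.mp hμ⟩ :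
            { x : ℝ // Module.End.eigenspace f x ≠ ⊥ })
          (fun ℓ => ⟨((n : ℝ) - 1 - 2 * (ℓ : ℕ)) * s,
            Module.End.hasEigenvalue_iff.mp (hval ℓ)⟩)) ?_
      · simpa using h
      rintro (_ | ℓ) (_ | ℓ') hh
      · rfl
      · exact absurd (congrArg Subtype.val hh) (hcon ℓ')
      · exact absurd (congrArg Subtype.val hh).symm (hcon ℓ)
      · exact congrArg some (hinj ℓ ℓ' (congrArg Subtype.val hh))
    omega
  · -- simplicity
    intro ℓ
    have hn : 0 < n := ℓ.pos
    set μ := ((n : ℝ) - 1 - 2 * (ℓ : ℕ)) * s with hμdef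
    set E := Module.End.eigenspace f μ with hE
    have hle : Module.finrank ℝ E ≤ 1 := by
      have hinj2 : Function.Injective
          ((LinearMap.proj (⟨0, hn⟩ : Fin n)).comp E.subtype) := by
        rw [← LinearMap.ker_eq_bot, LinearMap.ker_eq_bot']
        intro v hv0
        have hv0' : (v : Fin n → ℝ) ⟨0, hn⟩ = 0 := hv0
        have hmem : f (v : Fin n → ℝ) = μ • (v : Fin n → ℝ) :=
          Module.End.mem_eigenspace_iff.mp v.2
        set u : Fin n → ℝ := (v : Fin n → ℝ) with hu
        set w : ℕ → ℝ := fun k => if hk : k < n then u ⟨k, hk⟩ else 0 with hw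
        have hwn : w n = 0 := by simp [hw]
        have heq : ∀ i : Fin n, ((i : ℕ) + 1 : ℝ) * w ((i : ℕ) + 1) +
            (if 1 ≤ (i : ℕ) then ((n - (i : ℕ) : ℕ) : ℝ) * w ((i : ℕ) - 1) * τ else 0)
            = μ * w (i : ℕ) := by
          intro i
          rw [← hsum i w hwn]
          have h1 : ∀ j : Fin n, w (j : ℕ) = u j := by
            intro j; simp [hw, j.isLt]
          have h2 := congrFun hmem i
          simp only [Pi.smul_apply, smul_eq_mul] at h2
          have h3 : (f u) i = ∑ j : Fin n, K i j * u j := by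
            rw [hf]
            simp [Matrix.toLin'_apply, Matrix.mulVec, dotProduct]
          rw [h3] at h2
          have h4 : ∑ j : Fin n, K i j * w (j : ℕ) = ∑ j : Fin n, K i j * u j :=
            Finset.sum_congr rfl fun j _ => by rw [h1 j]
          rw [h4, h2, h1 i]
        have hwall : ∀ k, w k = 0 := by
          intro k
          induction k using Nat.strong_induction_on with
          | _ k ih =>
            match k with
            | 0 =>
                by_cases h0 : 0 < n
                · simp only [hw, dif_pos h0]
                  exact hv0'
                · simp [hw, h0]
            | (m + 1) =>
                by_cases h : m + 1 < n
                · have hm : m < n := by omega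
                  have := heq ⟨m, hm⟩
                  simp only at this
                  rw [ih m (by omega)] at this
                  have hpre : (if 1 ≤ m then ((n - m : ℕ) : ℝ) * w (m - 1) * τ else 0) = 0 := by
                    by_cases h1 : 1 ≤ m
                    · rw [if_pos h1, ih (m - 1) (by omega)]; ring
                    · rw [if_neg h1]
                  rw [hpre] at this
                  have : ((m : ℝ) + 1) * w (m + 1) = 0 := by linarith
                  have hm1 : ((m : ℝ) + 1) ≠ 0 := by positivity
                  exact (mul_eq_zero.mp this).resolve_left hm1
                · simp [hw, h]
        ext i
        have : w (i : ℕ) = 0 := hwall i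
        simpa [hw, i.isLt] using this
      have := LinearMap.finrank_le_finrank_of_injective hinj2
      simpa using this
    have hge : 1 ≤ Module.finrank ℝ E := by
      have hnb : E ≠ ⊥ := Module.End.hasEigenvalue_iff.mp (hval ℓ)
      haveI : Nontrivial E := Submodule.nontrivial_iff_ne_bot.mpr hnb
      exact Module.finrank_pos
    omega
end
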